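/- A vector field u : ℝ³ → ℝ³ is called symmetric if u₁(x₁,x₂,x₃) = u₂(x₃,x₁,x₂) = u₃(x₂,x₃,x₁) for all x, and for each i, u_i is odd in x_i and even in x_j for j ≠ i. If u is a smooth symmetric vector field, then (u·∇)u is also symmetric. -/

import Mathlib

open Real

/-- Partial derivative in the `i`-th coordinate direction. -/
noncomputable def pd (i : Fin 3) (f : (Fin 3 → ℝ) → ℝ) (x : Fin 3 → ℝ) : ℝ :=
  fderiv ℝ f x (Pi.single i 1)

/-- A vector field `u : ℝ³ → ℝ³` is *symmetric* if
(A) `u₁(x₁,x₂,x₃) = u₂(x₃,x₁,x₂) = u₃(x₂,x₃,x₁)` for all `x`, and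
(B) each `u_i` is odd in `x_i` and even in `x_j` for `j ≠ i`. -/
def IsSymmetricVF (u : (Fin 3 → ℝ) → (Fin 3 → ℝ)) : Prop :=
  (∀ x : Fin 3 → ℝ, u x 0 = u ![x 2, x 0, x 1] 1 ∧ u x 0 = u ![x 1, x 2, x 0] 2) ∧
  (∀ (i : Fin 3) (x : Fin 3 → ℝ), u (Function.update x i (-(x i))) i = - u x i) ∧
  (∀ (i j : Fin 3), j ≠ i → ∀ x : Fin 3 → ℝ, u (Function.update x j (-(x j))) i = u x i)

/-- The cyclic permutation `x ↦ (x₂, x₀, x₁)` as a continuous linear map. -/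
noncomputable def Pc : (Fin 3 → ℝ) →L[ℝ] (Fin 3 → ℝ) :=
  ContinuousLinearMap.pi (fun i => ContinuousLinearMap.proj (![2, 0, 1] i))

/-- The reflection in the `j`-th coordinate as a continuous linear map. -/
noncomputable def Rf (j : Fin 3) : (Fin 3 → ℝ) →L[ℝ] (Fin 3 → ℝ) :=
  ContinuousLinearMap.pi (fun i =>
    if i = j then -(ContinuousLinearMap.proj i) else ContinuousLinearMap.proj i)

lemma Pc_apply (x : Fin 3 → ℝ) : Pc x = ![x 2, x 0, x 1] := by
  funext i
  fin_cases i <;> rfl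

lemma Rf_apply (j : Fin 3) (x : Fin 3 → ℝ) :
    Rf j x = Function.update x j (-(x j)) := by
  funext i
  by_cases h : i = j
  · subst h
    simp [Rf, ContinuousLinearMap.pi_apply]
  · simp [Rf, ContinuousLinearMap.pi_apply, h, Function.update_of_ne h]

/-- The convected derivative equals `(Du)(x) (u x)` componentwise. -/
lemma conv_eq (u : (Fin 3 → ℝ) → (Fin 3 → ℝ)) (hu : Differentiable ℝ u)
    (x : Fin 3 → ℝ) (i : Fin 3) :
    ∑ j, u x j * pd j (fun y => u y i) x = fderiv ℝ u x (u x) i := by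
  have hproj : ∀ j : Fin 3, pd j (fun y => u y i) x
      = fderiv ℝ u x (Pi.single j 1) i := by
    intro j
    have h : (fun y => u y i)
        = (ContinuousLinearMap.proj i : (Fin 3 → ℝ) →L[ℝ] ℝ) ∘ u := rfl
    unfold pd
    rw [h, fderiv_comp x ((ContinuousLinearMap.proj i).differentiableAt) (hu x),
      ContinuousLinearMap.fderiv]
    rfl
  simp only [hproj]
  have hx : (∑ j : Fin 3, u x j • (Pi.single j (1 : ℝ) : Fin 3 → ℝ)) = u x := by
    have h1 : ∀ j : Fin 3, u x j • (Pi.single j (1 : ℝ) : Fin 3 → ℝ)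
        = Pi.single j (u x j) := by
      intro j; rw [← Pi.single_smul, smul_eq_mul, mul_one]
    simp_rw [h1]
    exact Finset.univ_sum_single (u x)
  calc ∑ j : Fin 3, u x j * fderiv ℝ u x (Pi.single j 1) i
      = ∑ j : Fin 3, (fderiv ℝ u x (u x j • (Pi.single j (1 : ℝ) : Fin 3 → ℝ))) i := by
        simp [smul_eq_mul]
    _ = (∑ j : Fin 3, fderiv ℝ u x (u x j • (Pi.single j (1 : ℝ) : Fin 3 → ℝ))) i := by
        rw [Finset.sum_apply]
    _ = fderiv ℝ u x (∑ j : Fin 3, u x j • (Pi.single j (1 : ℝ) : Fin 3 → ℝ)) i := by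
        rw [map_sum]
    _ = fderiv ℝ u x (u x) i := by rw [hx]

/-- Equivariance of `x ↦ (Du)(x)(u x)` under a linear symmetry of `u`. -/
lemma w_equiv (u : (Fin 3 → ℝ) → (Fin 3 → ℝ)) (hu : Differentiable ℝ u)
    (A : (Fin 3 → ℝ) →L[ℝ] (Fin 3 → ℝ)) (h : ∀ x, u (A x) = A (u x))
    (x : Fin 3 → ℝ) :
    fderiv ℝ u (A x) (u (A x)) = A (fderiv ℝ u x (u x)) := by
  have h1 : fderiv ℝ (u ∘ A) x = (fderiv ℝ u (A x)).comp A := by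
    rw [fderiv_comp x (hu (A x)) A.differentiableAt, ContinuousLinearMap.fderiv]
  have h2 : fderiv ℝ ((A : (Fin 3 → ℝ) → (Fin 3 → ℝ)) ∘ u) x
      = A.comp (fderiv ℝ u x) := by
    rw [fderiv_comp x A.differentiableAt (hu x), ContinuousLinearMap.fderiv]
  have heq : (u ∘ A) = ((A : (Fin 3 → ℝ) → (Fin 3 → ℝ)) ∘ u) := funext h
  rw [h x]
  have := h1.symm.trans (heq ▸ h2)
  have := congrArg (fun T : (Fin 3 → ℝ) →L[ℝ] (Fin 3 → ℝ) => T (u x)) this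
  simpa using this

/-- If `u` is a smooth symmetric vector field, then `(u·∇)u` is also symmetric. -/
theorem stmt19 (u : (Fin 3 → ℝ) → (Fin 3 → ℝ)) (hu : ContDiff ℝ (⊤ : ℕ∞) u)
    (hs : IsSymmetricVF u) :
    IsSymmetricVF (fun x i => ∑ j, u x j * pd j (fun y => u y i) x) := by
  have hd : Differentiable ℝ u := hu.differentiable (by simp)
  obtain ⟨hA, hOdd, hEven⟩ := hs
  -- full equivariance of u under Pc
  have hP : ∀ x, u (Pc x) = Pc (u x) := by
    have C1 : ∀ y : Fin 3 → ℝ, u y 0 = u (Pc y) 1 := by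
      intro y; rw [Pc_apply]; exact (hA y).1
    have C2 : ∀ y : Fin 3 → ℝ, u y 0 = u (Pc (Pc y)) 2 := by
      intro y
      have : Pc (Pc y) = ![y 1, y 2, y 0] := by
        funext i; fin_cases i <;> simp [Pc_apply]
      rw [this]; exact (hA y).2
    have hP3 : ∀ y : Fin 3 → ℝ, Pc (Pc (Pc y)) = y := by
      intro y; funext i; fin_cases i <;> simp [Pc_apply]
    intro x
    funext i
    fin_cases i
    · have hc2 := C2 (Pc x)
      rw [hP3 x] at hc2
      simpa [Pc_apply] using hc2
    · simpa [Pc_apply] using (C1 x).symm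
    · have hc1 := C1 (Pc (Pc x))
      rw [hP3 x] at hc1
      have hc2' := C2 (Pc (Pc x))
      rw [hP3 (Pc x)] at hc2'
      simpa [Pc_apply] using hc2'.symm.trans hc1
  have hR : ∀ j : Fin 3, ∀ x, u (Rf j x) = Rf j (u x) := by
    intro j x
    funext i
    rw [Rf_apply, Rf_apply]
    by_cases h : i = j
    · subst h
      rw [Function.update_self]
      exact hOdd i x
    · rw [Function.update_of_ne h]
      exact hEven i j (fun hh => h hh.symm) x
  -- rewrite the convected field
  set w : (Fin 3 → ℝ) → (Fin 3 → ℝ) := fun x => fderiv ℝ u x (u x) with hw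
  have hconv : ∀ x i, (∑ j, u x j * pd j (fun y => u y i) x) = w x i := by
    intro x i; exact conv_eq u hd x i
  have hwP : ∀ x, w (Pc x) = Pc (w x) := fun x => by
    simpa [hw, hP x] using w_equiv u hd Pc hP x
  have hwR : ∀ j x, w (Rf j x) = Rf j (w x) := fun j x => by
    simpa [hw, hR j x] using w_equiv u hd (Rf j) (hR j) x
  refine ⟨?_, ?_, ?_⟩
  · intro x
    constructor
    · simp only [hconv]
      have h1 : (![x 2, x 0, x 1] : Fin 3 → ℝ) = Pc x := (Pc_apply x).symm
      rw [h1, hwP x, Pc_apply]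
      simp
    · simp only [hconv]
      have h2 : (![x 1, x 2, x 0] : Fin 3 → ℝ) = Pc (Pc x) := by
        funext i; fin_cases i <;> simp [Pc_apply]
      have h3 : Pc (Pc (w x)) = ![w x 1, w x 2, w x 0] := by
        funext i; fin_cases i <;> simp [Pc_apply]
      rw [h2, hwP (Pc x), hwP x, h3]
      simp
  · intro i x
    simp only [hconv]
    rw [← Rf_apply, hwR i x, Rf_apply]
    simp
  · intro i j hij x
    simp only [hconv]
    rw [← Rf_apply, hwR j x, Rf_apply]
    rw [Function.update_of_ne (Ne.symm hij)]
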